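/- Let M be the set of fixed-point-free involutions in the symmetric group on the set {1, 2, 3, 4, 5, 6} (M has exactly 15 elements), and let the subgroup H of S₆ generated by the permutations (1 2 3), (4 5 6) and (1 4)(2 5)(3 6) act on M by conjugation. Then this action has exactly 3 orbits, of sizes 3, 3 and 9. -/

import Mathlib

/-!
The group `H` has order 18: `(1 2 3)` and `(4 5 6)` generate `C₃ × C₃`, and the third generator
swaps the two triples. Among the 15 perfect matchings of `{1,…,6}`, the six that pair each
`i ∈ {1, 2, 3}` with some `j + 3`, `j ∈ {1, 2, 3}`, split into the three "translations"
`j ≡ i + k` and the three "reflections" `j ≡ k - i` (mod 3), each an orbit of size 3; the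
remaining nine, with one pair inside each triple and one crossing pair, form a single orbit.

A finite set stable under conjugation by the generators is stable under the whole group, since
conjugation by an element permutes it. So each orbit is certified by this stability together
with conjugating one representative by the 18 words `c₁ᵃ c₂ᵇ sᶜ` in the generators, both finite
computations.
-/

/-- The set of fixed-point-free involutions of `{1,…,6}` (realized on `Fin 6`). -/
def FPFInv : Set (Equiv.Perm (Fin 6)) := {σ | σ * σ = 1 ∧ ∀ i, σ i ≠ i}

/-- The subgroup of `S₆` generated by `(1 2 3)`, `(4 5 6)` and `(1 4)(2 5)(3 6)`
(zero-indexed on `Fin 6`). -/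
def H19 : Subgroup (Equiv.Perm (Fin 6)) :=
  Subgroup.closure
    {Equiv.swap 0 1 * Equiv.swap 1 2,
     Equiv.swap 3 4 * Equiv.swap 4 5,
     Equiv.swap 0 3 * Equiv.swap 1 4 * Equiv.swap 2 5}

/-- The orbits of the conjugation action of `H19` on `FPFInv`. -/
def Orbits19 : Set (Set (Equiv.Perm (Fin 6))) :=
  (fun σ => {τ | ∃ g ∈ H19, g * σ * g⁻¹ = τ}) '' FPFInv

section ConjOrbit

variable {G : Type*} [Group G]

def conjOrbit (H : Subgroup G) (σ : G) : Set G := {τ | ∃ g ∈ H, g * σ * g⁻¹ = τ}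

theorem conjOrbit_eq_of_mem {H : Subgroup G} {σ τ : G} (h : τ ∈ conjOrbit H σ) :
    conjOrbit H τ = conjOrbit H σ := by
  obtain ⟨g, hg, rfl⟩ := h
  ext ρ
  constructor
  · rintro ⟨k, hk, rfl⟩
    exact ⟨k * g, mul_mem hk hg, by group⟩
  · rintro ⟨k, hk, rfl⟩
    exact ⟨k * g⁻¹, mul_mem hk (inv_mem hg), by group⟩

theorem Finset.conj_inv_mem_of_conj_mem {O : Finset G} {g : G}
    (h : ∀ τ ∈ O, g * τ * g⁻¹ ∈ O) : ∀ τ ∈ O, g⁻¹ * τ * g⁻¹⁻¹ ∈ O := by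
  intro τ hτ
  have hbij := (O.finite_toSet.injOn_iff_bijOn_of_mapsTo h).mp (MulAut.conj g).injective.injOn
  obtain ⟨τ', hτ', rfl⟩ := hbij.surjOn hτ
  simpa [mul_assoc] using hτ'

theorem Finset.conj_mem_of_mem_closure {S : Set G} {O : Finset G}
    (hS : ∀ s ∈ S, ∀ τ ∈ O, s * τ * s⁻¹ ∈ O) {g : G} (hg : g ∈ Subgroup.closure S) :
    ∀ τ ∈ O, g * τ * g⁻¹ ∈ O := by
  induction hg using Subgroup.closure_induction with
  | mem s hs => exact hS s hs
  | one => simp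
  | mul x y _ _ hx hy =>
    intro τ hτ
    simpa [mul_assoc] using hx _ (hy τ hτ)
  | inv x _ hx => exact O.conj_inv_mem_of_conj_mem hx

theorem conjOrbit_closure_eq {S : Set G} {O : Finset G}
    (hS : ∀ s ∈ S, ∀ τ ∈ O, s * τ * s⁻¹ ∈ O)
    (htrans : ∃ σ ∈ O, ∀ τ ∈ O, τ ∈ conjOrbit (Subgroup.closure S) σ) :
    ∀ τ ∈ O, conjOrbit (Subgroup.closure S) τ = O := by
  obtain ⟨σ, hσ, hO⟩ := htrans
  have horbit : conjOrbit (Subgroup.closure S) σ = O := by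
    refine subset_antisymm ?_ hO
    rintro _ ⟨g, hg, rfl⟩
    exact O.conj_mem_of_mem_closure hS hg σ hσ
  intro τ hτ
  rw [conjOrbit_eq_of_mem (hO τ hτ), horbit]

end ConjOrbit

section Partition

variable {α : Type*}

theorem ncard_image_finsetCoe (𝒪 : Finset (Finset α)) :
    ((↑) '' (𝒪 : Set (Finset α)) : Set (Set α)).ncard = 𝒪.card := by
  rw [Set.ncard_image_of_injective _ Finset.coe_injective, Set.ncard_coe_finset]

theorem ncard_setOf_mem_image_finsetCoe_ncard_eq (𝒪 : Finset (Finset α)) (k : ℕ) :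
    {S ∈ ((↑) '' (𝒪 : Set (Finset α)) : Set (Set α)) | S.ncard = k}.ncard =
      (𝒪.filter (·.card = k)).card := by
  have : {S ∈ ((↑) '' (𝒪 : Set (Finset α)) : Set (Set α)) | S.ncard = k} =
      (↑) '' ((𝒪.filter (·.card = k) : Finset (Finset α)) : Set (Finset α)) := by
    ext S
    simp only [Set.mem_image, Finset.coe_filter, Finset.mem_coe]
    constructor
    · rintro ⟨⟨O, hO, rfl⟩, hk⟩
      exact ⟨O, ⟨hO, by rwa [Set.ncard_coe_finset] at hk⟩, rfl⟩
    · rintro ⟨O, ⟨hO, hk⟩, rfl⟩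
      exact ⟨⟨O, hO, rfl⟩, by rwa [Set.ncard_coe_finset]⟩
  rw [this, ncard_image_finsetCoe]

theorem image_eq_image_finsetCoe_of_partition [DecidableEq α] (f : α → Set α) {X : Set α}
    {𝒪 : Finset (Finset α)} (hX : X = ↑(𝒪.biUnion id))
    (hf : ∀ O ∈ 𝒪, ∀ x ∈ O, f x = O) (hne : ∀ O ∈ 𝒪, O.Nonempty) :
    f '' X = (↑) '' (𝒪 : Set (Finset α)) := by
  subst hX
  ext S
  simp only [Set.mem_image, Finset.coe_biUnion, Finset.mem_coe, id, Set.mem_iUnion, exists_prop]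
  constructor
  · rintro ⟨x, ⟨O, hO, hx⟩, rfl⟩
    exact ⟨O, hO, (hf O hO x hx).symm⟩
  · rintro ⟨O, hO, rfl⟩
    obtain ⟨x, hx⟩ := hne O hO
    exact ⟨x, ⟨O, hO, hx⟩, hf O hO x hx⟩

end Partition

namespace H19

open Equiv

def matching (a b c d e f : Fin 6) : Perm (Fin 6) := swap a b * swap c d * swap e f

def cycleFst : Perm (Fin 6) := swap 0 1 * swap 1 2
def cycleSnd : Perm (Fin 6) := swap 3 4 * swap 4 5
def swapFactors : Perm (Fin 6) := matching 0 3 1 4 2 5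

def generators : Finset (Perm (Fin 6)) := {cycleFst, cycleSnd, swapFactors}

theorem eq_closure_generators : H19 = Subgroup.closure ↑generators := by
  simp [H19, generators, cycleFst, cycleSnd, swapFactors, matching]

def word (a b c : ℕ) : Perm (Fin 6) := cycleFst ^ a * cycleSnd ^ b * swapFactors ^ c

theorem word_mem (a b c : ℕ) : word a b c ∈ H19 := by
  have hmem : ∀ g ∈ generators, g ∈ H19 := fun g hg =>
    eq_closure_generators ▸ Subgroup.subset_closure hg
  exact mul_mem (mul_mem (pow_mem (hmem _ (by decide)) a) (pow_mem (hmem _ (by decide)) b))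
    (pow_mem (hmem _ (by decide)) c)

theorem conjOrbit_eq_of_words {O : Finset (Perm (Fin 6))}
    (hstable : ∀ s ∈ generators, ∀ τ ∈ O, s * τ * s⁻¹ ∈ O)
    (hwords : ∃ σ ∈ O, ∀ τ ∈ O,
      ∃ a : Fin 3, ∃ b : Fin 3, ∃ c : Fin 2, word a b c * σ * (word a b c)⁻¹ = τ) :
    ∀ τ ∈ O, conjOrbit H19 τ = O := by
  obtain ⟨σ, hσ, hwords⟩ := hwords
  have hO : ∀ τ ∈ O, τ ∈ conjOrbit H19 σ := fun τ hτ => by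
    obtain ⟨a, b, c, rfl⟩ := hwords τ hτ
    exact ⟨_, word_mem a b c, rfl⟩
  rw [eq_closure_generators] at hO ⊢
  exact conjOrbit_closure_eq hstable ⟨σ, hσ, hO⟩

def translations : Finset (Perm (Fin 6)) :=
  {matching 0 3 1 4 2 5, matching 0 5 1 3 2 4, matching 0 4 1 5 2 3}

def reflections : Finset (Perm (Fin 6)) :=
  {matching 0 3 1 5 2 4, matching 0 4 1 3 2 5, matching 0 5 1 4 2 3}

def oneCrossing : Finset (Perm (Fin 6)) :=
  {matching 0 1 2 3 4 5, matching 0 3 1 2 4 5, matching 0 1 2 4 3 5,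
   matching 0 5 1 2 3 4, matching 0 2 1 3 4 5, matching 0 4 1 2 3 5,
   matching 0 1 2 5 3 4, matching 0 2 1 5 3 4, matching 0 2 1 4 3 5}

def orbitFamily : Finset (Finset (Perm (Fin 6))) := {translations, reflections, oneCrossing}

theorem FPFInv_eq_biUnion : FPFInv = ↑(orbitFamily.biUnion id) :=
  Set.ext (by decide +kernel :
    ∀ σ : Perm (Fin 6), (σ * σ = 1 ∧ ∀ i, σ i ≠ i) ↔ σ ∈ orbitFamily.biUnion id)

theorem conjOrbit_eq_of_mem_orbitFamily :
    ∀ O ∈ orbitFamily, ∀ τ ∈ O, conjOrbit H19 τ = O := by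
  simp only [orbitFamily, Finset.forall_mem_insert, Finset.mem_singleton, forall_eq]
  exact ⟨conjOrbit_eq_of_words (by decide +kernel) (by decide +kernel),
    conjOrbit_eq_of_words (by decide +kernel) (by decide +kernel),
    conjOrbit_eq_of_words (by decide +kernel) (by decide +kernel)⟩

theorem Orbits19_eq : Orbits19 = (↑) '' (orbitFamily : Set (Finset (Perm (Fin 6)))) :=
  image_eq_image_finsetCoe_of_partition _ FPFInv_eq_biUnion conjOrbit_eq_of_mem_orbitFamily
    (by simp [orbitFamily, translations, reflections, oneCrossing])

end H19

open H19 in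
theorem stmt19 :
    FPFInv.ncard = 15 ∧
    Orbits19.ncard = 3 ∧
    {S ∈ Orbits19 | S.ncard = 3}.ncard = 2 ∧
    {S ∈ Orbits19 | S.ncard = 9}.ncard = 1 := by
  refine ⟨?_, ?_, ?_, ?_⟩
  · rw [FPFInv_eq_biUnion, Set.ncard_coe_finset]
    decide +kernel
  · rw [Orbits19_eq, ncard_image_finsetCoe]
    decide +kernel
  all_goals
    rw [Orbits19_eq, ncard_setOf_mem_image_finsetCoe_ncard_eq]
    decide +kernel
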